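/- For all integers s ≥ 3, k ≥ 1, and m ≥ 1, N^s_{2k−1}(2m) ≤ 2·N^s_{2k−1}(m) + 2·N^{s−1}_k(m) (an inequality in the extended naturals). -/

import Mathlib

/-- The alternating list `a b a b ...` of length `l`. -/
def altList (a b : ℕ) : ℕ → List ℕ
  | 0 => []
  | l + 1 => a :: altList b a l

/-- `S` contains an alternation of length `l`: two distinct symbols occur as an
alternating (not necessarily contiguous) subsequence of length `l`. -/
def HasAlt (S : List ℕ) (l : ℕ) : Prop :=
  ∃ a b : ℕ, a ≠ b ∧ (altList a b l).Sublist S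

/-- A Davenport–Schinzel sequence of order `s`: no two adjacent equal entries and
no alternation of length `s + 2`. -/
def IsDS (s : ℕ) (S : List ℕ) : Prop :=
  List.Chain' (· ≠ ·) S ∧ ¬ HasAlt S (s + 2)

/-- `S` can be partitioned into at most `m` contiguous blocks, each consisting of
pairwise distinct symbols. -/
def HasBlocks (S : List ℕ) (m : ℕ) : Prop :=
  ∃ Bs : List (List ℕ), Bs.length ≤ m ∧ S = Bs.flatten ∧ ∀ B ∈ Bs, B.Nodup

/-- `λ_s(n)`: maximum length of a Davenport–Schinzel sequence of order `s`
using at most `n` distinct symbols. -/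
noncomputable def lambdaDS (s n : ℕ) : ℕ :=
  sSup {L | ∃ S : List ℕ, IsDS s S ∧ S.toFinset.card ≤ n ∧ S.length = L}

/-- `ψ_s(m,n)`: maximum length of a Davenport–Schinzel sequence of order `s` on at
most `n` distinct symbols partitionable into at most `m` blocks of distinct symbols. -/
noncomputable def psiDS (s m n : ℕ) : ℕ :=
  sSup {L | ∃ S : List ℕ, IsDS s S ∧ S.toFinset.card ≤ n ∧ HasBlocks S m ∧ S.length = L}

/-- The Ackermann hierarchy: `A_1(n) = 2n`, and `A_k(n) = A_{k-1}^{(n)}(1)` for `k ≥ 2`. -/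
def Ak : ℕ → ℕ → ℕ
  | 0, n => n + 1
  | 1, n => 2 * n
  | k + 2, n => (Ak (k + 1))^[n] 1

/-- The Ackermann function `A(n) = A_n(3)`. -/
def AckF (n : ℕ) : ℕ := Ak n 3

/-- `α_k(x) = min {n | A_k(n) ≥ x}`. -/
noncomputable def invAk (k x : ℕ) : ℕ := sInf {n | x ≤ Ak k n}

/-- `α(x) = min {n | A(n) ≥ x}`. -/
noncomputable def invA (x : ℕ) : ℕ := sInf {n | x ≤ AckF n}

/-- An `ADS^s_k(m)`-sequence: at most `m` blocks of distinct symbols, every occurring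
symbol appears at least `k` times, and no alternation of length `s + 2`. -/
def IsADS (s k m : ℕ) (S : List ℕ) : Prop :=
  HasBlocks S m ∧ (∀ a ∈ S, k ≤ S.count a) ∧ ¬ HasAlt S (s + 2)

/-- `N^s_k(m)`: the supremum (possibly infinite) of the number of distinct symbols
in an `ADS^s_k(m)`-sequence. -/
noncomputable def NADS (s k m : ℕ) : ℕ∞ :=
  sSup {c : ℕ∞ | ∃ S : List ℕ, IsADS s k m S ∧ c = (S.toFinset.card : ℕ∞)}

/-- `S` is `r`-sparse: any at most `r` consecutive entries are pairwise distinct. -/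
def Sparse (r : ℕ) (S : List ℕ) : Prop :=
  ∀ l : List ℕ, l <:+: S → l.length ≤ r → l.Nodup

/-- `S` contains the pattern `u`: some subsequence of `S` is an injectively renamed
copy of `u`. -/
def ContainsPat (S u : List ℕ) : Prop :=
  ∃ f : ℕ → ℕ, Set.InjOn f {a | a ∈ u} ∧ (u.map f).Sublist S

/-- `Ex_u(n)`: maximum length of an `r`-sparse `u`-free sequence on at most `n`
distinct symbols, where `r` is the number of distinct symbols of `u`. -/
noncomputable def ExDS (u : List ℕ) (n : ℕ) : ℕ :=
  sSup {L | ∃ S : List ℕ, Sparse u.toFinset.card S ∧ ¬ ContainsPat S u ∧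
    S.toFinset.card ≤ n ∧ S.length = L}

/-- An `(r,s)`-formation: a concatenation of `s` permutations of a single set of
`r` distinct symbols. -/
def IsFormation (r s : ℕ) (F : List ℕ) : Prop :=
  ∃ A : Finset ℕ, A.card = r ∧ ∃ Bs : List (List ℕ), Bs.length = s ∧
    (∀ B ∈ Bs, B.Nodup ∧ B.toFinset = A) ∧ F = Bs.flatten

/-- An `(r,s)`-formation-free sequence: `r`-sparse and containing no
`(r,s)`-formation as a subsequence. -/
def FormationFree (r s : ℕ) (S : List ℕ) : Prop :=
  Sparse r S ∧ ¬ ∃ F : List ℕ, IsFormation r s F ∧ F.Sublist S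

/-- `F_{r,s}(n)`: maximum length of an `(r,s)`-formation-free sequence on at most
`n` distinct symbols. -/
noncomputable def FDS (r s n : ℕ) : ℕ :=
  sSup {L | ∃ S : List ℕ, FormationFree r s S ∧ S.toFinset.card ≤ n ∧ S.length = L}


/-!
Cut the blocks of `S` after the first `m₁` into `S₁ ++ S₂` and sort the symbols of `S` into four
classes. Symbols occurring in only one half keep all their occurrences there. A shared symbol
either occurs at least `i` times in `S₁`, or else at least `j` times in `S₂`. Restricted to shared
symbols, an alternation in `S₁` extends by one letter taken from `S₂`, and an alternation in `S₂`
by one letter taken from `S₁`, so these two restrictions avoid alternations of length `s + 1`.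
-/

lemma altList_succ_eq_concat (a b l : ℕ) :
    altList a b (l + 1) = altList a b l ++ [if l % 2 = 0 then a else b] := by
  induction l generalizing a b with
  | zero => simp [altList]
  | succ n ih =>
    show a :: altList b a (n + 1) = a :: altList b a n ++ _
    rw [ih b a]
    rcases Nat.mod_two_eq_zero_or_one n with h | h <;> simp [h, Nat.add_mod]

namespace HasAlt

variable {S T : List ℕ} {l : ℕ}

lemma mono (hST : S.Sublist T) (h : HasAlt S l) : HasAlt T l :=
  let ⟨a, b, hab, hS⟩ := h
  ⟨a, b, hab, hS.trans hST⟩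

lemma append_right (h : HasAlt S (l + 2)) (hST : ∀ x ∈ S, x ∈ T) :
    HasAlt (S ++ T) (l + 3) := by
  obtain ⟨a, b, hab, hS⟩ := h
  have ha : a ∈ T := hST a (hS.subset (by simp [altList]))
  have hb : b ∈ T := hST b (hS.subset (by simp [altList]))
  refine ⟨a, b, hab, ?_⟩
  rw [altList_succ_eq_concat]
  exact hS.append (List.singleton_sublist.2 (by split <;> assumption))

lemma append_left (h : HasAlt T (l + 2)) (hTS : ∀ x ∈ T, x ∈ S) :
    HasAlt (S ++ T) (l + 3) := by
  obtain ⟨a, b, hab, hT⟩ := h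
  have hb : b ∈ S := hTS b (hT.subset (by simp [altList]))
  exact ⟨b, a, hab.symm, (List.singleton_sublist.2 hb).append hT⟩

end HasAlt

namespace HasBlocks

variable {S : List ℕ}

lemma filter {m : ℕ} (p : ℕ → Bool) (h : HasBlocks S m) : HasBlocks (S.filter p) m := by
  obtain ⟨Bs, hlen, rfl, hnd⟩ := h
  refine ⟨Bs.map (List.filter p), by simpa using hlen, List.filter_flatten, ?_⟩
  simp only [List.mem_map]
  rintro _ ⟨B, hB, rfl⟩
  exact (hnd B hB).filter p

lemma exists_append {m₁ m₂ : ℕ} (h : HasBlocks S (m₁ + m₂)) :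
    ∃ S₁ S₂, S = S₁ ++ S₂ ∧ HasBlocks S₁ m₁ ∧ HasBlocks S₂ m₂ := by
  obtain ⟨Bs, hlen, rfl, hnd⟩ := h
  refine ⟨(Bs.take m₁).flatten, (Bs.drop m₁).flatten,
    by rw [← List.flatten_append, List.take_append_drop], ?_, ?_⟩
  · exact ⟨Bs.take m₁, by simp, rfl, fun B hB => hnd B (List.mem_of_mem_take hB)⟩
  · exact ⟨Bs.drop m₁, by simp only [List.length_drop]; omega, rfl,
      fun B hB => hnd B (List.mem_of_mem_drop hB)⟩

end HasBlocks

lemma isADS_filter {s k m : ℕ} {S : List ℕ} (p : ℕ → Bool) (hB : HasBlocks S m)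
    (hcount : ∀ a ∈ S, p a → k ≤ S.count a) (halt : ¬ HasAlt (S.filter p) (s + 2)) :
    IsADS s k m (S.filter p) := by
  refine ⟨hB.filter p, fun a ha => ?_, halt⟩
  obtain ⟨haS, hpa⟩ := List.mem_filter.1 ha
  rw [List.count_filter hpa]
  exact hcount a haS hpa

lemma card_toFinset_le_NADS {s k m : ℕ} {S : List ℕ} (h : IsADS s k m S) :
    (S.toFinset.card : ℕ∞) ≤ NADS s k m :=
  le_sSup ⟨S, h, rfl⟩

lemma card_toFinset_le_add {S T U : List ℕ} (h : ∀ x ∈ S, x ∈ T ∨ x ∈ U) :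
    (S.toFinset.card : ℕ∞) ≤ T.toFinset.card + U.toFinset.card := by
  have hsub : S.toFinset ⊆ T.toFinset ∪ U.toFinset := fun x hx => by
    simpa using h x (List.mem_toFinset.1 hx)
  exact_mod_cast (Finset.card_le_card hsub).trans (Finset.card_union_le _ _)

lemma card_toFinset_append_le (T U : List ℕ) :
    ((T ++ U).toFinset.card : ℕ∞) ≤ T.toFinset.card + U.toFinset.card :=
  card_toFinset_le_add fun _ => List.mem_append.1

theorem NADS_add_le {s K i j m₁ m₂ : ℕ} (hij : i + j ≤ K + 1) :
    NADS (s + 1) K (m₁ + m₂) ≤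
      NADS (s + 1) K m₁ + NADS (s + 1) K m₂ + (NADS s i m₁ + NADS s j m₂) := by
  refine sSup_le ?_
  rintro _ ⟨S, ⟨hB, hcount, halt⟩, rfl⟩
  obtain ⟨S₁, S₂, rfl, hB₁, hB₂⟩ := hB.exists_append
  have hcount₁₂ : ∀ a ∈ S₁ ++ S₂, K ≤ S₁.count a + S₂.count a := fun a ha =>
    List.count_append (a := a) ▸ hcount a ha
  set A₁ := S₁.filter (· ∉ S₂)
  set A₂ := S₂.filter (· ∉ S₁)
  set A₃ := S₁.filter fun a => a ∈ S₂ ∧ i ≤ S₁.count a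
  set A₄ := S₂.filter fun a => a ∈ S₁ ∧ S₁.count a < i
  have h₁ : IsADS (s + 1) K m₁ A₁ := by
    refine isADS_filter _ hB₁ (fun a ha hp => ?_) fun h => halt (h.mono ?_)
    · have hS₂ : S₂.count a = 0 := List.count_eq_zero.2 (by simpa using hp)
      have := hcount₁₂ a (List.mem_append_left _ ha)
      omega
    · exact List.filter_sublist.trans (List.sublist_append_left _ _)
  have h₂ : IsADS (s + 1) K m₂ A₂ := by
    refine isADS_filter _ hB₂ (fun a ha hp => ?_) fun h => halt (h.mono ?_)
    · have hS₁ : S₁.count a = 0 := List.count_eq_zero.2 (by simpa using hp)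
      have := hcount₁₂ a (List.mem_append_right _ ha)
      omega
    · exact List.filter_sublist.trans (List.sublist_append_right _ _)
  have h₃ : IsADS s i m₁ A₃ := by
    refine isADS_filter _ hB₁ (fun a _ hp => (by simpa using hp : _ ∧ _).2) fun h => halt ?_
    refine (h.append_right fun x hx => ?_).mono (List.filter_sublist.append_right _)
    exact (by simpa using (List.mem_filter.1 hx).2 : _ ∧ _).1
  have h₄ : IsADS s j m₂ A₄ := by
    refine isADS_filter _ hB₂ (fun a ha hp => ?_) fun h => halt ?_
    · have := hcount₁₂ a (List.mem_append_right _ ha)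
      have := (by simpa using hp : _ ∧ _).2
      omega
    refine (h.append_left fun x hx => ?_).mono (List.filter_sublist.append_left _)
    exact (by simpa using (List.mem_filter.1 hx).2 : _ ∧ _).1
  have hcover : ∀ x ∈ S₁ ++ S₂, x ∈ A₁ ++ A₂ ∨ x ∈ A₃ ++ A₄ := by
    intro x hx
    simp only [A₁, A₂, A₃, A₄, List.mem_append, List.mem_filter, decide_eq_true_eq] at hx ⊢
    rcases lt_or_ge (S₁.count x) i with hi | hi <;> tauto
  calc ((S₁ ++ S₂).toFinset.card : ℕ∞)
      ≤ (A₁ ++ A₂).toFinset.card + (A₃ ++ A₄).toFinset.card := card_toFinset_le_add hcover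
    _ ≤ A₁.toFinset.card + A₂.toFinset.card + (A₃.toFinset.card + A₄.toFinset.card) :=
      add_le_add (card_toFinset_append_le _ _) (card_toFinset_append_le _ _)
    _ ≤ _ := by
      gcongr <;> apply card_toFinset_le_NADS <;> assumption

/-- For all `s ≥ 3`, `k ≥ 1`, `m ≥ 1`:
`N^s_{2k−1}(2m) ≤ 2·N^s_{2k−1}(m) + 2·N^{s−1}_k(m)` in the extended naturals. -/
theorem NADS_halving :
    ∀ s k m : ℕ, 3 ≤ s → 1 ≤ k → 1 ≤ m →
      NADS s (2 * k - 1) (2 * m) ≤ 2 * NADS s (2 * k - 1) m + 2 * NADS (s - 1) k m := by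
  intro s k m hs hk _
  obtain ⟨s, rfl⟩ : ∃ t, s = t + 1 := ⟨s - 1, by omega⟩
  have h := NADS_add_le (s := s) (K := 2 * k - 1) (m₁ := m) (m₂ := m) (show k + k ≤ _ by omega)
  simpa only [two_mul, Nat.add_sub_cancel] using h
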